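/- For X ⊆ B(n) with no idempotents, the following are equivalent: (i) X is a face of the subsemigroup complex H(B(n)); (ii) the edges of the directed graph Γ(X) can be enumerated e_1,...,e_m so that each e_i is a separating edge of the subgraph with edges {e_1,...,e_i}; (iii) every subgraph of Γ(X) with at least one edge has a separating edge. -/

import Mathlib

/-- The aperiodic Brandt semigroup `B(n)` on `({1..n} × {1..n}) ∪ {0}`,
with `none` playing the role of the zero element. -/
abbrev B (n : ℕ) := Option (Fin n × Fin n)

/-- Multiplication in `B(n)`: `(i,j)(k,l) = (i,l)` if `j = k`, and `0` otherwise. -/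
def bmul {n : ℕ} : B n → B n → B n
  | some (i, j), some (k, l) => if j = k then some (i, l) else none
  | _, _ => none

/-- A subset of `B(n)` is a subsemigroup if it is closed under multiplication. -/
def IsSub {n : ℕ} (T : Set (B n)) : Prop :=
  ∀ x ∈ T, ∀ y ∈ T, bmul x y ∈ T

/-- The subsemigroup of `B(n)` generated by a subset. -/
def gen {n : ℕ} (X : Set (B n)) : Set (B n) :=
  ⋂₀ {T | IsSub T ∧ X ⊆ T}

/-- `X` is a face of the subsemigroup complex `H(B(n))`: it admits an enumeration
producing a strictly increasing chain of generated subsemigroups. -/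
def IsFace {n : ℕ} (X : Set (B n)) : Prop :=
  ∃ l : List (B n), l.Nodup ∧ {x | x ∈ l} = X ∧
    ∀ (i : ℕ) (h : i < l.length), l.get ⟨i, h⟩ ∉ gen {x | x ∈ l.take i}

/-- A facet is a maximal face. -/
def IsFacet {n : ℕ} (X : Set (B n)) : Prop :=
  IsFace X ∧ ∀ Y : Set (B n), IsFace Y → X ⊆ Y → X = Y

/-- Product `x * y₁ * ⋯ * y_k` in `B(n)`. -/
def bprod {n : ℕ} : B n → List (B n) → B n
  | x, [] => x
  | x, y :: l => bprod (bmul x y) l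

/-- Closure under the inverse operation `(i,j) ↦ (j,i)`. -/
def InvClosed {n : ℕ} (T : Set (B n)) : Prop :=
  ∀ i j : Fin n, some (i, j) ∈ T → some (j, i) ∈ T

/-- A nilpotent subsemigroup of `B(n)` containing `0`: some power is `{0}`. -/
def IsNilpSub {n : ℕ} (T : Set (B n)) : Prop :=
  IsSub T ∧ none ∈ T ∧ ∃ k : ℕ, 1 ≤ k ∧
    ∀ (x : B n) (l : List (B n)), x ∈ T → (∀ y ∈ l, y ∈ T) →
      l.length + 1 = k → bprod x l = none
/-- `e` is a separating edge of the digraph with edge set `Es`: `e ∈ Es` and there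
is no directed path from the source of `e` to its target avoiding `e`. -/
def SepEdge {n : ℕ} (Es : Set (Fin n × Fin n)) (e : Fin n × Fin n) : Prop :=
  e ∈ Es ∧
    ¬ Relation.TransGen (fun a b : Fin n => (a, b) ∈ Es ∧ (a, b) ≠ e) e.1 e.2

/-!
A nonzero product in `B(n)` is exactly a walk `(i₀,i₁)(i₁,i₂)⋯`, so `(a, b)` lies in the
subsemigroup generated by a set of pairs iff the graph of that set has a path from `a` to `b`.
Hence an enumeration is a face enumeration iff each edge is separating in the graph formed by it
and its predecessors. Given such an enumeration, the last edge of a nonempty subgraph separates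
that subgraph; conversely, removing a separating edge and recursing builds the enumeration
backwards.
-/

section Generation

variable {n : ℕ}

lemma subset_gen (S : Set (B n)) : S ⊆ gen S :=
  fun _ hx _ hT => hT.2 hx

lemma isSub_gen (S : Set (B n)) : IsSub (gen S) :=
  fun x hx y hy T hT => hT.1 x (hx T hT) y (hy T hT)

lemma gen_subset_of_isSub {S T : Set (B n)} (hT : IsSub T) (hST : S ⊆ T) : gen S ⊆ T :=
  fun _ hx => hx T ⟨hT, hST⟩

@[simp]
lemma bmul_some_some (i j k l : Fin n) :
    bmul (some (i, j)) (some (k, l)) = if j = k then some (i, l) else none :=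
  rfl

lemma some_mem_gen_iff (S : Set (B n)) (a b : Fin n) :
    some (a, b) ∈ gen S ↔ Relation.TransGen (fun p q => some (p, q) ∈ S) a b := by
  set R := fun p q => some (p, q) ∈ S
  constructor
  · intro h
    let T : Set (B n) := {x | ∀ p q, x = some (p, q) → Relation.TransGen R p q}
    have hT : IsSub T := by
      rintro (_ | ⟨p, q⟩) hx (_ | ⟨r, s⟩) hy <;> try (intro _ _ h; cases h)
      simp only [bmul_some_some]
      split_ifs with hqr
      · rintro _ _ ⟨⟩
        exact (hx p q rfl).trans (hqr ▸ hy r s rfl)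
      · rintro _ _ ⟨⟩
    have hST : S ⊆ T := by
      rintro x hx p q rfl
      exact .single hx
    exact gen_subset_of_isSub hT hST h a b rfl
  · intro h
    induction h with
    | single h => exact subset_gen S h
    | tail _ hbc ih => simpa using isSub_gen S _ ih _ (subset_gen S hbc)

end Generation

lemma List.exists_eq_map_some {α : Type*} : ∀ {l : List (Option α)}, none ∉ l →
    ∃ l' : List α, l = l'.map some
  | [], _ => ⟨[], rfl⟩
  | none :: _, h => absurd List.mem_cons_self h
  | some a :: _, h =>
    let ⟨l', hl'⟩ := List.exists_eq_map_some fun hn => h (List.mem_cons_of_mem _ hn)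
    ⟨a :: l', by rw [hl', List.map_cons]⟩

lemma List.Nodup.getElem_notMem_take {α : Type*} {l : List α} (hl : l.Nodup) {i : ℕ}
    (h : i < l.length) : l[i] ∉ l.take i := by
  have hnd : (l.take i ++ [l[i]]).Nodup := by
    rw [List.take_append_getElem]
    exact hl.sublist (List.take_sublist _ _)
  exact fun hmem => (List.nodup_append.mp hnd).2.2 _ hmem _ List.mem_cons_self rfl

section SeparatingEdges

variable {n : ℕ}

lemma SepEdge.mono {Es Fs : Set (Fin n × Fin n)} {e : Fin n × Fin n} (h : SepEdge Fs e)
    (he : e ∈ Es) (hEF : Es ⊆ Fs) : SepEdge Es e :=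
  ⟨he, fun hpath => h.2 (Relation.TransGen.mono (fun _ _ hab => ⟨hEF hab.1, hab.2⟩) _ _ hpath)⟩

lemma sepEdge_insert_iff {Es : Set (Fin n × Fin n)} {e : Fin n × Fin n} (he : e ∉ Es) :
    SepEdge (insert e Es) e ↔ ¬ Relation.TransGen (fun a b => (a, b) ∈ Es) e.1 e.2 := by
  have hrel : (fun a b => (a, b) ∈ insert e Es ∧ (a, b) ≠ e) = fun a b => (a, b) ∈ Es := by
    ext a b
    constructor
    · rintro ⟨hab | hab, hne⟩
      exacts [absurd hab hne, hab]
    · exact fun hab => ⟨Or.inr hab, fun h => he (h ▸ hab)⟩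
  simp only [SepEdge, hrel, Set.mem_insert, true_and]

def IsSepEnum (l : List (Fin n × Fin n)) : Prop :=
  ∀ (i : ℕ) (h : i < l.length), SepEdge {e | e ∈ l.take (i + 1)} (l.get ⟨i, h⟩)

lemma isSepEnum_iff_not_transGen {l : List (Fin n × Fin n)} (hl : l.Nodup) :
    IsSepEnum l ↔ ∀ (i : ℕ) (h : i < l.length),
      ¬ Relation.TransGen (fun a b => (a, b) ∈ l.take i) l[i].1 l[i].2 := by
  refine forall₂_congr fun i h => ?_
  have htake : {e | e ∈ l.take (i + 1)} = insert l[i] {e | e ∈ l.take i} := by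
    ext e
    rw [Set.mem_ofPred_eq, ← List.take_append_getElem h]
    simp only [List.mem_append, List.mem_singleton, Set.mem_insert_iff, Set.mem_ofPred_eq, or_comm]
  rw [List.get_eq_getElem, htake, sepEdge_insert_iff (hl.getElem_notMem_take h)]
  rfl

lemma isSepEnum_append_singleton {l : List (Fin n × Fin n)} {e : Fin n × Fin n} :
    IsSepEnum (l ++ [e]) ↔ IsSepEnum l ∧ SepEdge {x | x ∈ l ++ [e]} e := by
  have hlast : (l ++ [e]).get ⟨l.length, by simp⟩ = e := by simp
  have hall : (l ++ [e]).take (l.length + 1) = l ++ [e] := List.take_of_length_le (by simp)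
  have hinit (i : ℕ) (h : i < l.length) :
      SepEdge {x | x ∈ (l ++ [e]).take (i + 1)} ((l ++ [e]).get ⟨i, by simp; omega⟩) ↔
        SepEdge {x | x ∈ l.take (i + 1)} (l.get ⟨i, h⟩) := by
    rw [List.take_append_of_le_length h, List.get_eq_getElem, List.getElem_append_left h]
    rfl
  constructor
  · intro hsep
    refine ⟨fun i h => (hinit i h).mp (hsep i (by simp; omega)), ?_⟩
    simpa only [hlast, hall] using hsep l.length (by simp)
  · rintro ⟨hsep, he⟩ i h
    rcases Nat.lt_or_ge i l.length with hi | hi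
    · exact (hinit i hi).mpr (hsep i hi)
    · obtain rfl : i = l.length := by simp at h; omega
      simpa only [hlast, hall] using he

lemma exists_sepEdge_of_isSepEnum {l : List (Fin n × Fin n)} (hl : IsSepEnum l)
    {Es : Set (Fin n × Fin n)} (hEs : Es ⊆ {e | e ∈ l}) (hne : Es.Nonempty) :
    ∃ e, SepEdge Es e := by
  induction l using List.reverseRecOn with
  | nil => simp [Set.subset_empty_iff, hne.ne_empty] at hEs
  | append_singleton l e ih =>
    rw [isSepEnum_append_singleton] at hl
    by_cases he : e ∈ Es
    · exact ⟨e, hl.2.mono he hEs⟩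
    · refine ih hl.1 fun x hx => ?_
      have : x ∈ l ∨ x = e := by simpa using hEs hx
      exact this.resolve_right fun hxe => he (hxe ▸ hx)

lemma exists_isSepEnum_of_forall_exists_sepEdge (E : Set (Fin n × Fin n))
    (hE : ∀ Es ⊆ E, Es.Nonempty → ∃ e, SepEdge Es e) :
    ∃ l : List (Fin n × Fin n), l.Nodup ∧ {e | e ∈ l} = E ∧ IsSepEnum l := by
  induction hk : E.ncard using Nat.strong_induction_on generalizing E with
  | _ k ih =>
  rcases E.eq_empty_or_nonempty with rfl | hne
  · exact ⟨[], List.nodup_nil, by simp, fun i h => absurd h (Nat.not_lt_zero i)⟩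
  obtain ⟨e, he⟩ := hE E subset_rfl hne
  obtain ⟨l, hnd, hl, hsep⟩ := ih _ (hk ▸ Set.ncard_sdiff_singleton_lt_of_mem he.1) (E \ {e})
    (fun Es hEs => hE Es (hEs.trans Set.sdiff_subset)) rfl
  have hel : e ∉ l := fun h => by simpa using hl.subset h
  have hset : {x | x ∈ l ++ [e]} = E := by
    ext x
    have hx := Set.ext_iff.mp hl x
    simp only [Set.mem_ofPred_eq, Set.mem_sdiff, Set.mem_singleton_iff] at hx
    simp only [Set.mem_ofPred_eq, List.mem_append, List.mem_singleton, hx]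
    constructor
    · rintro (hx | rfl)
      exacts [hx.1, he.1]
    · intro hxE
      exact (em (x = e)).symm.imp (fun hxe => ⟨hxE, hxe⟩) id
  refine ⟨l ++ [e], ?_, hset, isSepEnum_append_singleton.mpr ⟨hsep, hset ▸ he⟩⟩
  exact hnd.append (List.nodup_singleton e) (List.disjoint_singleton.mpr hel)

end SeparatingEdges

section Faces

variable {n : ℕ}

lemma some_mem_gen_map_some_iff (l : List (Fin n × Fin n)) (e : Fin n × Fin n) :
    some e ∈ gen {x | x ∈ l.map some} ↔ Relation.TransGen (fun p q => (p, q) ∈ l) e.1 e.2 := by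
  obtain ⟨a, b⟩ := e
  simp only [some_mem_gen_iff, Set.mem_ofPred_eq,
    List.mem_map_of_injective (Option.some_injective _)]

lemma isFace_iff_exists_isSepEnum {X : Set (B n)} (hX : none ∉ X) :
    IsFace X ↔ ∃ l : List (Fin n × Fin n), l.Nodup ∧ {e | e ∈ l} = {e | some e ∈ X} ∧
      IsSepEnum l := by
  have hcond (l : List (Fin n × Fin n)) (hl : l.Nodup) :
      (∀ (i : ℕ) (h : i < (l.map some).length),
        (l.map some).get ⟨i, h⟩ ∉ gen {x | x ∈ (l.map some).take i}) ↔ IsSepEnum l := by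
    rw [isSepEnum_iff_not_transGen hl]
    simp only [List.length_map, List.get_eq_getElem, List.getElem_map, ← List.map_take,
      some_mem_gen_map_some_iff]
  constructor
  · rintro ⟨L, hnd, rfl, hL⟩
    obtain ⟨l, rfl⟩ := List.exists_eq_map_some hX
    have hl := hnd.of_map some
    refine ⟨l, hl, ?_, (hcond l hl).mp hL⟩
    ext
    simp only [Set.mem_ofPred_eq, List.mem_map_of_injective (Option.some_injective _)]
  · rintro ⟨l, hl, hlX, hsep⟩
    refine ⟨l.map some, hl.map (Option.some_injective _), ?_, (hcond l hl).mpr hsep⟩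
    ext (_ | e)
    · simpa using hX
    · simpa only [Set.mem_ofPred_eq, List.mem_map_of_injective (Option.some_injective _)]
        using Set.ext_iff.mp hlX e

end Faces

/-- For `X ⊆ B(n)` with no idempotents, the following are equivalent:
(i) `X` is a face of `H(B(n))`; (ii) the edges of `Γ(X)` can be enumerated so that
each is a separating edge of the subgraph formed by it and its predecessors;
(iii) every subgraph of `Γ(X)` with at least one edge has a separating edge. -/
theorem stmt14 (n : ℕ) (X : Set (B n))
    (hX : ∀ x ∈ X, ∃ i j : Fin n, i ≠ j ∧ x = some (i, j)) :
    (IsFace X ↔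
      ∃ l : List (Fin n × Fin n), l.Nodup ∧ {e | e ∈ l} = {e | some e ∈ X} ∧
        ∀ (i : ℕ) (h : i < l.length),
          SepEdge {e | e ∈ l.take (i + 1)} (l.get ⟨i, h⟩)) ∧
    (IsFace X ↔
      ∀ Es : Set (Fin n × Fin n), Es ⊆ {e | some e ∈ X} → Es.Nonempty →
        ∃ e, SepEdge Es e) := by
  have hnone : none ∉ X := fun h => by simpa using hX none h
  have hface := isFace_iff_exists_isSepEnum hnone
  refine ⟨hface, hface.trans ⟨?_, exists_isSepEnum_of_forall_exists_sepEdge _⟩⟩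
  rintro ⟨l, -, hlX, hsep⟩ Es hEs
  exact exists_sepEdge_of_isSepEnum hsep (hlX ▸ hEs)
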